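/- Let n ≥ 1 be a natural number, Ω > 0, and ζ₀ > 0. Consider the linear nonautonomous system x′(ζ) = A(ζ)x(ζ) on [ζ₀, ∞), where A(ζ) is the 2×2 matrix with rows (0, 1) and (−Ω^{1/n}/(1 + 1/n), −2/ζ). Then the origin is asymptotically stable: (i) for every ε > 0 there exists δ > 0 such that every differentiable solution x : [ζ₀, ∞) → ℝ² with ‖x(ζ₀)‖ < δ satisfies ‖x(ζ)‖ < ε for all ζ ≥ ζ₀; and (ii) every differentiable solution x : [ζ₀, ∞) → ℝ² satisfies x(ζ) → 0 as ζ → ∞. -/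

import Mathlib

/-!
With `y = ζ x₁` the system becomes the harmonic oscillator `y'' = -ω y`, so the energy
`ω y² + y'²` is constant along solutions. Bounding `ζ² ‖x(ζ)‖²` by this energy and the energy
by `‖x(ζ₀)‖²` gives `‖x(ζ)‖ ≤ C ‖x(ζ₀)‖ / ζ`, which yields both stability and decay.
-/

open Filter Set

namespace LaneEmden

def IsLinSolution (ω ζ₀ : ℝ) (x₁ x₂ : ℝ → ℝ) : Prop :=
  ∀ ζ ∈ Ici ζ₀, HasDerivWithinAt x₁ (x₂ ζ) (Ici ζ₀) ζ ∧
    HasDerivWithinAt x₂ (-ω * x₁ ζ - (2 / ζ) * x₂ ζ) (Ici ζ₀) ζ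

def energy (ω : ℝ) (x₁ x₂ : ℝ → ℝ) (ζ : ℝ) : ℝ :=
  ω * (ζ * x₁ ζ) ^ 2 + (x₁ ζ + ζ * x₂ ζ) ^ 2

section Solution

variable {ω ζ₀ : ℝ} {x₁ x₂ : ℝ → ℝ}

theorem IsLinSolution.hasDerivWithinAt_energy (hζ₀ : 0 < ζ₀) (hx : IsLinSolution ω ζ₀ x₁ x₂)
    {ζ : ℝ} (hζ : ζ ∈ Ici ζ₀) : HasDerivWithinAt (energy ω x₁ x₂) 0 (Ici ζ₀) ζ := by
  obtain ⟨h₁, h₂⟩ := hx ζ hζ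
  have hy : HasDerivWithinAt (fun t => t * x₁ t) (1 * x₁ ζ + ζ * x₂ ζ) (Ici ζ₀) ζ :=
    (hasDerivWithinAt_id ζ _).mul h₁
  have hy' : HasDerivWithinAt (fun t => x₁ t + t * x₂ t)
      (x₂ ζ + (1 * x₂ ζ + ζ * (-ω * x₁ ζ - (2 / ζ) * x₂ ζ))) (Ici ζ₀) ζ :=
    h₁.add ((hasDerivWithinAt_id ζ _).mul h₂)
  have hζ2 : ζ * (2 / ζ) = 2 := by field_simp [(hζ₀.trans_le hζ).ne']
  refine (((hy.pow 2).const_mul ω).add (hy'.pow 2)).congr_deriv ?_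
  linear_combination (-2 * (x₁ ζ + ζ * x₂ ζ) * x₂ ζ) * hζ2

theorem IsLinSolution.energy_eq (hζ₀ : 0 < ζ₀) (hx : IsLinSolution ω ζ₀ x₁ x₂) {ζ : ℝ}
    (hζ : ζ₀ ≤ ζ) : energy ω x₁ x₂ ζ = energy ω x₁ x₂ ζ₀ := by
  have h := Convex.norm_image_sub_le_of_norm_hasDerivWithin_le (C := 0)
    (fun t ht => hx.hasDerivWithinAt_energy hζ₀ ht) (fun _ _ => norm_zero.le) (convex_Ici ζ₀)
    self_mem_Ici (mem_Ici.2 hζ)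
  simpa [sub_eq_zero] using h

end Solution

theorem energy_le_sq_add_sq {ω : ℝ} (hω : 0 ≤ ω) (ζ a b : ℝ) :
    ω * (ζ * a) ^ 2 + (a + ζ * b) ^ 2 ≤ (ω * ζ ^ 2 + 2 + 2 * ζ ^ 2) * (a ^ 2 + b ^ 2) := by
  nlinarith [sq_nonneg (a - ζ * b), mul_nonneg hω (sq_nonneg (ζ * b))]

theorem sq_add_sq_le_energy {ω ζ₀ ζ : ℝ} (hω : 0 < ω) (hζ₀ : 0 < ζ₀) (hζ : ζ₀ ≤ ζ) (a b : ℝ) :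
    ω * ζ₀ ^ 2 * (ζ ^ 2 * (a ^ 2 + b ^ 2))
      ≤ (ζ₀ ^ 2 + 2 * ω * ζ₀ ^ 2 + 2) * (ω * (ζ * a) ^ 2 + (a + ζ * b) ^ 2) := by
  set E := ω * (ζ * a) ^ 2 + (a + ζ * b) ^ 2
  have ha : ω * (ζ * a) ^ 2 ≤ E := le_add_of_nonneg_right (sq_nonneg _)
  -- `ζ b = (a + ζ b) - a`
  have hb : (ζ * b) ^ 2 ≤ 2 * E + 2 * a ^ 2 := by
    nlinarith [sq_nonneg (2 * a + ζ * b), mul_nonneg hω.le (sq_nonneg (ζ * a))]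
  have ha₀ : ω * ζ₀ ^ 2 * a ^ 2 ≤ E := by
    nlinarith [mul_le_mul_of_nonneg_left (pow_le_pow_left₀ hζ₀.le hζ 2)
      (mul_nonneg hω.le (sq_nonneg a))]
  nlinarith [mul_le_mul_of_nonneg_left ha (sq_nonneg ζ₀),
    mul_le_mul_of_nonneg_left hb (mul_nonneg hω.le (sq_nonneg ζ₀))]

theorem exists_mul_sqrt_le {ω ζ₀ : ℝ} (hω : 0 < ω) (hζ₀ : 0 < ζ₀) :
    ∃ C > 0, ∀ x₁ x₂ : ℝ → ℝ, IsLinSolution ω ζ₀ x₁ x₂ → ∀ ζ, ζ₀ ≤ ζ →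
      ζ * √(x₁ ζ ^ 2 + x₂ ζ ^ 2) ≤ C * √(x₁ ζ₀ ^ 2 + x₂ ζ₀ ^ 2) := by
  set K := ζ₀ ^ 2 + 2 * ω * ζ₀ ^ 2 + 2
  set L := ω * ζ₀ ^ 2 + 2 + 2 * ζ₀ ^ 2
  refine ⟨√(K * L / (ω * ζ₀ ^ 2)), by positivity, fun x₁ x₂ hx ζ hζ => ?_⟩
  have hsq : ζ ^ 2 * (x₁ ζ ^ 2 + x₂ ζ ^ 2) ≤ K * L / (ω * ζ₀ ^ 2) * (x₁ ζ₀ ^ 2 + x₂ ζ₀ ^ 2) := by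
    rw [div_mul_eq_mul_div, le_div_iff₀ (by positivity), mul_comm, mul_assoc K]
    calc ω * ζ₀ ^ 2 * (ζ ^ 2 * (x₁ ζ ^ 2 + x₂ ζ ^ 2))
        ≤ K * energy ω x₁ x₂ ζ := sq_add_sq_le_energy hω hζ₀ hζ _ _
      _ = K * energy ω x₁ x₂ ζ₀ := by rw [hx.energy_eq hζ₀ hζ]
      _ ≤ K * (L * (x₁ ζ₀ ^ 2 + x₂ ζ₀ ^ 2)) := by
        gcongr
        exact energy_le_sq_add_sq hω.le ζ₀ _ _
  calc ζ * √(x₁ ζ ^ 2 + x₂ ζ ^ 2) = √(ζ ^ 2 * (x₁ ζ ^ 2 + x₂ ζ ^ 2)) := by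
        rw [Real.sqrt_mul (sq_nonneg _), Real.sqrt_sq (hζ₀.le.trans hζ)]
    _ ≤ √(K * L / (ω * ζ₀ ^ 2) * (x₁ ζ₀ ^ 2 + x₂ ζ₀ ^ 2)) := Real.sqrt_le_sqrt hsq
    _ = _ := Real.sqrt_mul (by positivity) _

end LaneEmden

open LaneEmden in
theorem laneEmden_linearized_asymptotically_stable
    (n : ℕ) (Ω ζ₀ : ℝ) (hΩ : 0 < Ω) (hζ₀ : 0 < ζ₀) :
    (∀ ε : ℝ, 0 < ε → ∃ δ : ℝ, 0 < δ ∧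
      ∀ x₁ x₂ : ℝ → ℝ,
        (∀ ζ ∈ Set.Ici ζ₀,
          HasDerivWithinAt x₁ (x₂ ζ) (Set.Ici ζ₀) ζ ∧
          HasDerivWithinAt x₂
            (-(Ω ^ (1 / (n : ℝ)) / (1 + 1 / (n : ℝ))) * x₁ ζ - (2 / ζ) * x₂ ζ)
            (Set.Ici ζ₀) ζ) →
        Real.sqrt (x₁ ζ₀ ^ 2 + x₂ ζ₀ ^ 2) < δ →
        ∀ ζ : ℝ, ζ₀ ≤ ζ → Real.sqrt (x₁ ζ ^ 2 + x₂ ζ ^ 2) < ε) ∧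
    (∀ x₁ x₂ : ℝ → ℝ,
      (∀ ζ ∈ Set.Ici ζ₀,
        HasDerivWithinAt x₁ (x₂ ζ) (Set.Ici ζ₀) ζ ∧
        HasDerivWithinAt x₂
          (-(Ω ^ (1 / (n : ℝ)) / (1 + 1 / (n : ℝ))) * x₁ ζ - (2 / ζ) * x₂ ζ)
          (Set.Ici ζ₀) ζ) →
      Tendsto (fun ζ : ℝ => Real.sqrt (x₁ ζ ^ 2 + x₂ ζ ^ 2)) atTop (nhds 0)) := by
  have hω : 0 < Ω ^ (1 / (n : ℝ)) / (1 + 1 / (n : ℝ)) := by positivity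
  obtain ⟨C, hC, hdecay⟩ := exists_mul_sqrt_le hω hζ₀
  refine ⟨fun ε hε => ⟨ε * ζ₀ / C, by positivity, fun x₁ x₂ hx h₀ ζ hζ => ?_⟩, fun x₁ x₂ hx => ?_⟩
  · refine lt_of_mul_lt_mul_left ?_ hζ₀.le
    calc ζ₀ * √(x₁ ζ ^ 2 + x₂ ζ ^ 2) ≤ ζ * √(x₁ ζ ^ 2 + x₂ ζ ^ 2) := by gcongr
      _ ≤ C * √(x₁ ζ₀ ^ 2 + x₂ ζ₀ ^ 2) := hdecay x₁ x₂ hx ζ hζ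
      _ < ζ₀ * ε := by rwa [lt_div_iff₀ hC, mul_comm, mul_comm ε] at h₀
  · refine squeeze_zero' (Eventually.of_forall fun _ => Real.sqrt_nonneg _) ?_
      ((tendsto_const_nhds (x := C * √(x₁ ζ₀ ^ 2 + x₂ ζ₀ ^ 2))).div_atTop tendsto_id)
    filter_upwards [eventually_ge_atTop ζ₀] with ζ hζ
    rw [id, le_div_iff₀ (hζ₀.trans_le hζ), mul_comm]
    exact hdecay x₁ x₂ hx ζ hζ
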